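/- The coordinate-sampler generator annihilates the invariant measure on coordinate functions: for the target ρ(dx, dv) = π(dx) φ(dv) with π(x) ∝ e^{-U(x)} and φ uniform on 𝒱 = {±e_i}, and for any compactly supported C^1 function f on ℝ^d × 𝒱, one has ∫ [⟨v, ∇_x f(x,v)⟩ + λ(x,v) Σ_{v*∈𝒱} (λ(x,-v*)/λ(x)) (f(x,v*) - f(x,v))] ρ(dx,dv) = 0, where λ(x,v) = λ^ref + ⟨v,∇U(x)⟩_+ and λ(x) = Σ_{v∈𝒱} λ(x,v). -/

import Mathlib

open MeasureTheory
open scoped InnerProductSpace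

/-! Integrating the transport term `⟨v, ∇ₓf⟩` by parts against `e^{-U}` turns it into
`⟨v, ∇U⟩ f`. Since `v ↦ -v` permutes `𝒱`, the total rates `Σ_v λ(x,v)` and `Σ_v λ(x,-v)` agree,
so the jump term collapses pointwise to `Σ_v (λ(x,-v) - λ(x,v)) f(x,v)`, and
`t₊ - (-t)₊ = t` makes this `-Σ_v ⟨v, ∇U(x)⟩ f(x,v)`: the two contributions cancel. -/

theorem Finset.sum_mul_sum_div_mul_sub {ι : Type*} [Fintype ι] (a b F : ι → ℝ)
    (hba : ∑ p, b p = ∑ p, a p) (ha : ∑ p, a p ≠ 0) :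
    ∑ p, a p * ∑ q, (b q / ∑ r, a r) * (F q - F p) = ∑ p, (b p - a p) * F p := by
  have hb : ∑ q, b q / ∑ r, a r = 1 := by rw [← Finset.sum_div, hba, div_self ha]
  simp_rw [mul_sub, Finset.sum_sub_distrib, ← Finset.sum_mul, hb, one_mul, mul_sub,
    Finset.sum_sub_distrib, ← Finset.sum_mul, sub_mul, Finset.sum_sub_distrib]
  rw [Finset.mul_sum]
  congr 1
  refine Finset.sum_congr rfl fun q _ => ?_
  field_simp

section IntegrationByParts

variable {E : Type*} [NormedAddCommGroup E] [NormedSpace ℝ E] [FiniteDimensional ℝ E]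
  [MeasurableSpace E] [BorelSpace E] {μ : Measure E} [μ.IsAddHaarMeasure]

theorem integral_mul_fderiv_eq_neg_fderiv_mul_of_hasCompactSupport {w g : E → ℝ}
    (hw : ContDiff ℝ 1 w) (hg : ContDiff ℝ 1 g) (hgc : HasCompactSupport g) (v : E) :
    ∫ x, w x * fderiv ℝ g x v ∂μ = -∫ x, fderiv ℝ w x v * g x ∂μ := by
  have hdw := (hw.continuous_fderiv one_ne_zero).clm_apply (continuous_const (y := v))
  have hdg := (hg.continuous_fderiv one_ne_zero).clm_apply (continuous_const (y := v))
  refine integral_mul_fderiv_eq_neg_fderiv_mul_of_integrable ?_ ?_ ?_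
    (fun x _ => hw.differentiable one_ne_zero x) (fun x _ => hg.differentiable one_ne_zero x)
  · exact (hdw.mul hg.continuous).integrable_of_hasCompactSupport hgc.mul_left
  · exact (hw.continuous.mul hdg).integrable_of_hasCompactSupport (hgc.fderiv_apply ℝ v).mul_left
  · exact (hw.continuous.mul hg.continuous).integrable_of_hasCompactSupport hgc.mul_left

end IntegrationByParts

section InnerProductSpace

variable {E : Type*} [NormedAddCommGroup E] [InnerProductSpace ℝ E]

section Complete

variable [CompleteSpace E]

theorem ContDiff.continuous_gradient {g : E → ℝ} (hg : ContDiff ℝ 1 g) :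
    Continuous (gradient g) :=
  (InnerProductSpace.toDual ℝ E).symm.continuous.comp (hg.continuous_fderiv one_ne_zero)

theorem HasCompactSupport.gradient {g : E → ℝ} (hg : HasCompactSupport g) :
    HasCompactSupport (gradient g) :=
  (hg.fderiv ℝ).comp_left (map_zero (InnerProductSpace.toDual ℝ E).symm)

noncomputable def eventRate (U : E → ℝ) (lref : ℝ) (x v : E) : ℝ :=
  lref + max ⟪v, gradient U x⟫_ℝ 0

variable {U : E → ℝ} {lref : ℝ}

theorem eventRate_neg_sub_eventRate (x v : E) :
    eventRate U lref x (-v) - eventRate U lref x v = -⟪v, gradient U x⟫_ℝ := by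
  have := max_zero_sub_max_neg_zero_eq_self ⟪v, gradient U x⟫_ℝ
  simp only [eventRate, inner_neg_left]
  linarith

theorem eventRate_pos (hlref : 0 < lref) (x v : E) : 0 < eventRate U lref x v :=
  add_pos_of_pos_of_nonneg hlref (le_max_right _ _)

theorem continuous_eventRate (hU : ContDiff ℝ 1 U) (v : E) :
    Continuous fun x => eventRate U lref x v :=
  continuous_const.add ((continuous_const.inner hU.continuous_gradient).max continuous_const)

theorem sum_eventRate_mul_jump {ι : Type*} [Fintype ι] {vec : ι → E} (σ : Equiv.Perm ι)
    (hσ : ∀ p, vec (σ p) = -vec p) {x : E} (hx : ∑ r, eventRate U lref x (vec r) ≠ 0)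
    (F : ι → ℝ) :
    ∑ p, eventRate U lref x (vec p) *
        ∑ q, (eventRate U lref x (-vec q) / ∑ r, eventRate U lref x (vec r)) * (F q - F p)
      = -∑ p, ⟪vec p, gradient U x⟫_ℝ * F p := by
  have hsum : ∑ p, eventRate U lref x (-vec p) = ∑ p, eventRate U lref x (vec p) := by
    simp_rw [← hσ]
    exact Equiv.sum_comp σ fun p => eventRate U lref x (vec p)
  rw [Finset.sum_mul_sum_div_mul_sub _ _ _ hsum hx, ← Finset.sum_neg_distrib]
  simp_rw [eventRate_neg_sub_eventRate, neg_mul]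

end Complete

variable [FiniteDimensional ℝ E] [MeasurableSpace E] [BorelSpace E] {μ : Measure E}
  [μ.IsAddHaarMeasure] {U : E → ℝ}

theorem integral_exp_neg_mul_inner_gradient (hU : ContDiff ℝ 1 U) {g : E → ℝ}
    (hg : ContDiff ℝ 1 g) (hgc : HasCompactSupport g) (v : E) :
    ∫ x, Real.exp (-U x) * ⟪v, gradient g x⟫_ℝ ∂μ
      = ∫ x, Real.exp (-U x) * ⟪v, gradient U x⟫_ℝ * g x ∂μ := by
  have hderiv : ∀ x, fderiv ℝ (fun y => Real.exp (-U y)) x v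
      = -(Real.exp (-U x) * fderiv ℝ U x v) := by
    intro x
    have h : HasFDerivAt (fun y => Real.exp (-U y)) (Real.exp (-U x) • -fderiv ℝ U x) x :=
      (hU.differentiable one_ne_zero x).hasFDerivAt.neg.exp
    simp [h.fderiv]
  simp only [inner_gradient_right, conj_trivial]
  rw [integral_mul_fderiv_eq_neg_fderiv_mul_of_hasCompactSupport hU.neg.exp hg hgc v,
    ← integral_neg]
  simp only [hderiv, neg_mul, neg_neg]

theorem sum_integral_generator_eq_zero {ι : Type*} [Fintype ι] [Nonempty ι]
    (hU : ContDiff ℝ 1 U) {lref : ℝ} (hlref : 0 < lref) {vec : ι → E} (σ : Equiv.Perm ι)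
    (hσ : ∀ p, vec (σ p) = -vec p) {f : E → ι → ℝ} (hf : ∀ p, ContDiff ℝ 1 (f · p))
    (hfc : ∀ p, HasCompactSupport (f · p)) :
    ∑ p, ∫ x, Real.exp (-U x) * (⟪vec p, gradient (f · p) x⟫_ℝ + eventRate U lref x (vec p) *
        ∑ q, (eventRate U lref x (-vec q) / ∑ r, eventRate U lref x (vec r)) * (f x q - f x p))
        ∂μ = 0 := by
  set jump : ι → E → ℝ := fun p x => eventRate U lref x (vec p) *
    ∑ q, (eventRate U lref x (-vec q) / ∑ r, eventRate U lref x (vec r)) * (f x q - f x p)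
  set drift : ι → E → ℝ := fun p x => Real.exp (-U x) * ⟪vec p, gradient U x⟫_ℝ * f x p
  have hexp : Continuous fun x => Real.exp (-U x) := hU.continuous.neg.rexp
  have htot : ∀ x, ∑ r, eventRate U lref x (vec r) ≠ 0 := fun x =>
    (Finset.sum_pos (fun r _ => eventRate_pos hlref x (vec r)) Finset.univ_nonempty).ne'
  have htransport : ∀ p,
      Integrable (fun x => Real.exp (-U x) * ⟪vec p, gradient (f · p) x⟫_ℝ) μ := fun p =>
    (hexp.mul (continuous_const.inner (hf p).continuous_gradient)).integrable_of_hasCompactSupport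
      ((hfc p).gradient.comp_left (inner_zero_right (vec p))).mul_left
  have hdrift : ∀ p, Integrable (drift p) μ := fun p =>
    ((hexp.mul (continuous_const.inner hU.continuous_gradient)).mul
      (hf p).continuous).integrable_of_hasCompactSupport (hfc p).mul_left
  have hjump : ∀ p, Integrable (fun x => Real.exp (-U x) * jump p x) μ := by
    intro p
    have hcont : Continuous (jump p) :=
      (continuous_eventRate hU _).mul <| continuous_finsetSum _ fun q _ =>
        ((continuous_eventRate hU _).div (continuous_finsetSum _ fun r _ =>
          continuous_eventRate hU _) htot).mul ((hf q).continuous.sub (hf p).continuous)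
    have hsupp : HasCompactSupport (jump p) :=
      HasCompactSupport.intro (isCompact_iUnion hfc) fun x hx => by
        have hzero : ∀ q, f x q = 0 := fun q =>
          image_eq_zero_of_notMem_tsupport (f := (f · q)) fun h => hx (Set.mem_iUnion.2 ⟨q, h⟩)
        simp [jump, hzero]
    exact (hexp.mul hcont).integrable_of_hasCompactSupport hsupp.mul_left
  have hbalance : ∀ x, ∑ p, Real.exp (-U x) * jump p x = -∑ p, drift p x := by
    intro x
    rw [← Finset.mul_sum, sum_eventRate_mul_jump σ hσ (htot x), mul_neg, Finset.mul_sum]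
    simp only [drift, mul_assoc]
  calc _ = ∑ p, ((∫ x, drift p x ∂μ) + ∫ x, Real.exp (-U x) * jump p x ∂μ) := by
        refine Finset.sum_congr rfl fun p _ => ?_
        simp_rw [mul_add]
        rw [integral_add (htransport p) (hjump p),
          integral_exp_neg_mul_inner_gradient hU (hf p) (hfc p)]
    _ = 0 := by
        rw [Finset.sum_add_distrib, ← integral_finsetSum _ fun p _ => hjump p]
        simp_rw [hbalance]
        rw [integral_neg, integral_finsetSum _ fun p _ => hdrift p, add_neg_cancel]

end InnerProductSpace

theorem coordinate_sampler_generator_integrates_to_zero_general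
    (d : ℕ) (hd : 0 < d) (U : EuclideanSpace ℝ (Fin d) → ℝ) (hU : ContDiff ℝ 1 U)
    (Z : ℝ) (lref : ℝ) (hlref : 0 < lref)
    (vec : Fin d × Bool → EuclideanSpace ℝ (Fin d))
    (hvec : ∀ p, vec p = (if p.2 then (1:ℝ) else -1) • EuclideanSpace.single p.1 (1:ℝ))
    (lam : EuclideanSpace ℝ (Fin d) → EuclideanSpace ℝ (Fin d) → ℝ)
    (hlam : ∀ x v, lam x v = lref + max ⟪v, gradient U x⟫_ℝ 0)
    (lamTot : EuclideanSpace ℝ (Fin d) → ℝ)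
    (hlamTot : ∀ x, lamTot x = ∑ p : Fin d × Bool, lam x (vec p))
    (f : EuclideanSpace ℝ (Fin d) → (Fin d × Bool) → ℝ)
    (hf : ∀ p, ContDiff ℝ 1 (fun x => f x p) ∧ HasCompactSupport (fun x => f x p)) :
    (1 / (2 * d * Z)) *
      ∑ p : Fin d × Bool,
        ∫ x : EuclideanSpace ℝ (Fin d),
          Real.exp (-U x) *
            (⟪vec p, gradient (fun y => f y p) x⟫_ℝ +
              lam x (vec p) *
                ∑ q : Fin d × Bool,
                  (lam x (-vec q) / lamTot x) * (f x q - f x p)) = 0 := by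
  obtain rfl : lam = eventRate U lref := by funext x v; exact hlam x v
  obtain rfl : lamTot = fun x => ∑ p, eventRate U lref x (vec p) := funext hlamTot
  have : Nonempty (Fin d) := Fin.pos_iff_nonempty.mp hd
  have hneg : ∀ p, vec (Equiv.prodCongr (Equiv.refl _) Equiv.boolNot p) = -vec p := by
    rintro ⟨i, b⟩
    cases b <;> simp [hvec]
  rw [sum_integral_generator_eq_zero hU hlref _ hneg (fun p => (hf p).1) (fun p => (hf p).2),
    mul_zero]

/-- The coordinate-sampler generator integrates to zero against
`ρ(dx,dv) = π(dx) φ(dv)`, with `π(x) ∝ e^{-U(x)}` and `φ` uniform on `𝒱 = {±e_i}`,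
for every compactly supported `C¹` test function `f`.  Here the elements of `𝒱` are
indexed by `Fin d × Bool` via `vec (i, b) = (if b then 1 else -1) • e_i`. -/
theorem coordinate_sampler_generator_integrates_to_zero
    (d : ℕ) (hd : 0 < d) (U : EuclideanSpace ℝ (Fin d) → ℝ) (hU : ContDiff ℝ 1 U)
    (hint : Integrable (fun x : EuclideanSpace ℝ (Fin d) => Real.exp (-U x)))
    (Z : ℝ) (hZ : Z = ∫ x : EuclideanSpace ℝ (Fin d), Real.exp (-U x))
    (lref : ℝ) (hlref : 0 < lref)
    (vec : Fin d × Bool → EuclideanSpace ℝ (Fin d))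
    (hvec : ∀ p, vec p = (if p.2 then (1:ℝ) else -1) • EuclideanSpace.single p.1 (1:ℝ))
    (lam : EuclideanSpace ℝ (Fin d) → EuclideanSpace ℝ (Fin d) → ℝ)
    (hlam : ∀ x v, lam x v = lref + max ⟪v, gradient U x⟫_ℝ 0)
    (lamTot : EuclideanSpace ℝ (Fin d) → ℝ)
    (hlamTot : ∀ x, lamTot x = ∑ p : Fin d × Bool, lam x (vec p))
    (f : EuclideanSpace ℝ (Fin d) → (Fin d × Bool) → ℝ)
    (hf : ∀ p, ContDiff ℝ 1 (fun x => f x p) ∧ HasCompactSupport (fun x => f x p)) :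
    (1 / (2 * d * Z)) *
      ∑ p : Fin d × Bool,
        ∫ x : EuclideanSpace ℝ (Fin d),
          Real.exp (-U x) *
            (⟪vec p, gradient (fun y => f y p) x⟫_ℝ +
              lam x (vec p) *
                ∑ q : Fin d × Bool,
                  (lam x (-vec q) / lamTot x) * (f x q - f x p)) = 0 :=
  coordinate_sampler_generator_integrates_to_zero_general d hd U hU Z lref hlref vec hvec lam hlam
    lamTot hlamTot f hf
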